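/- arXiv:2312.06812 — 2 statements merged into one kernel-verified Lean document; each statement's English description precedes it below -/
import Mathlib

section
/- Let A be an invertible 2×2 complex symmetric matrix such that both Re(A) and Re(A^{-1}) are positive definite, and let s ∈ ℂ. Let S(s) = ∑_{j∈ℤ², j≠0} [ ∫₁^∞ t^{s−1} e^{−π Q_A(j) t} dt + (1/√(det A)) ∫₁^∞ t^{−s} e^{−π Q_{A^{-1}}(j) t} dt ] and let S_ρ(s) denote the same sum restricted to the lattice points j with j₁² + j₂² ≤ ρ². Then there exist constants C > 0 and c > 0 (depending on A and s) such that |S(s) − S_ρ(s)| ≤ C e^{−c (ρ−1)²} for all ρ ≥ 1: the truncation error of the incomplete-Gamma series decays like a Gaussian in the truncation radius. -/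
/-! Positive definiteness of `Re A` and `Re A⁻¹` gives `Re Q_A(j), Re Q_{A⁻¹}(j) ≥ α |j|²`, so both
incomplete Gamma integrals `∫₁^∞ t^z e^{-π Q t} dt` are `O(e^{-π α |j|²})` and the summands are
bounded by `K e^{-γ |j|²}`. On the tail `|j| > ρ`, so `e^{-γ |j|²} ≤ e^{-γ ρ² / 2} e^{-γ |j|² / 2}`:
the tail is at most `e^{-γ ρ² / 2}` times a convergent Gaussian lattice sum. -/

open Complex MeasureTheory Real

noncomputable section

/-- Quadratic form `Q_A(v) = E v₁² + 2F v₁v₂ + G v₂²` of a 2×2 complex matrix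
`A = [[E,F],[F,G]]`, evaluated at a real vector `v = (v₁, v₂)`. -/
def quadForm (A : Matrix (Fin 2) (Fin 2) ℂ) (v : ℝ × ℝ) : ℂ :=
  A 0 0 * (v.1 : ℂ) ^ 2 + 2 * A 0 1 * (v.1 : ℂ) * (v.2 : ℂ) + A 1 1 * (v.2 : ℂ) ^ 2

/-- Quadratic form evaluated at a lattice point `j ∈ ℤ²`. -/
def quadFormZ (A : Matrix (Fin 2) (Fin 2) ℂ) (j : ℤ × ℤ) : ℂ :=
  quadForm A ((j.1 : ℝ), (j.2 : ℝ))

/-- Entrywise real part of a complex matrix. -/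
def reMat (A : Matrix (Fin 2) (Fin 2) ℂ) : Matrix (Fin 2) (Fin 2) ℝ :=
  A.map Complex.re

/-- The summand of the incomplete-Gamma expansion of the Epstein zeta function:
`∫₁^∞ t^{s-1} e^{-π Q_A(j) t} dt + (1/√(det A)) ∫₁^∞ t^{-s} e^{-π Q_{A⁻¹}(j) t} dt`. -/
def incGammaTerm (A : Matrix (Fin 2) (Fin 2) ℂ) (s : ℂ) (j : ℤ × ℤ) : ℂ :=
  (∫ t in Set.Ioi (1 : ℝ), (t : ℂ) ^ (s - 1) * Complex.exp (-(π : ℂ) * quadFormZ A j * t)) +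
    1 / A.det ^ ((1 : ℂ) / 2) *
      ∫ t in Set.Ioi (1 : ℝ), (t : ℂ) ^ (-s) * Complex.exp (-(π : ℂ) * quadFormZ A⁻¹ j * t)

lemma re_quadForm (A : Matrix (Fin 2) (Fin 2) ℂ) (v : ℝ × ℝ) :
    (quadForm A v).re =
      (A 0 0).re * v.1 ^ 2 + 2 * (A 0 1).re * v.1 * v.2 + (A 1 1).re * v.2 ^ 2 := by
  simp [quadForm, ← Complex.ofReal_pow]

lemma mul_sq_add_sq_le_of_det_pos {a b c : ℝ} (ha : 0 < a) (hdet : 0 < a * c - b ^ 2)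
    (x y : ℝ) :
    (a * c - b ^ 2) / (a + c) * (x ^ 2 + y ^ 2) ≤ a * x ^ 2 + 2 * b * x * y + c * y ^ 2 := by
  have hc : 0 < c := by nlinarith [sq_nonneg b]
  rw [div_mul_eq_mul_div, div_le_iff₀ (by positivity)]
  nlinarith [sq_nonneg (a * x + b * y), sq_nonneg (b * x + c * y)]

lemma exists_pos_mul_le_re_quadForm {A : Matrix (Fin 2) (Fin 2) ℂ} (hA : (reMat A).PosDef) :
    ∃ α > 0, ∀ v : ℝ × ℝ, α * (v.1 ^ 2 + v.2 ^ 2) ≤ (quadForm A v).re := by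
  have h00 : 0 < (A 0 0).re := hA.diag_pos (i := 0)
  have hdet : 0 < (A 0 0).re * (A 1 1).re - (A 0 1).re ^ 2 := by
    have hsymm : (A 1 0).re = (A 0 1).re := by simpa [reMat] using hA.isHermitian.apply 0 1
    simpa [Matrix.det_fin_two, reMat, hsymm, sq] using hA.det_pos
  refine ⟨_, div_pos hdet (add_pos h00 (hA.diag_pos (i := 1))), fun v => ?_⟩
  rw [re_quadForm]
  exact mul_sq_add_sq_le_of_det_pos h00 hdet v.1 v.2

lemma summable_exp_neg_mul_int_sq {γ : ℝ} (hγ : 0 < γ) :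
    Summable fun n : ℤ => rexp (-γ * (n : ℝ) ^ 2) := by
  -- the Jacobi theta bound `|n|^k e^{-π (T n² - 2 S |n|)}` with `k = 0`, `S = 0`, `T = γ / π`
  refine (summable_pow_mul_jacobiTheta₂_term_bound 0 (T := γ / π) (by positivity) 0).congr
    fun n => ?_
  field_simp
  ring_nf

lemma summable_exp_neg_mul_sq_add_sq {γ : ℝ} (hγ : 0 < γ) :
    Summable fun j : ℤ × ℤ => rexp (-γ * ((j.1 : ℝ) ^ 2 + (j.2 : ℝ) ^ 2)) := by
  have h := summable_exp_neg_mul_int_sq hγ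
  refine (h.mul_of_nonneg h (fun _ => (exp_pos _).le) fun _ => (exp_pos _).le).congr
    fun j => ?_
  rw [← Real.exp_add]
  ring_nf

lemma one_le_sq_add_sq_of_ne_zero {j : ℤ × ℤ} (hj : j ≠ 0) :
    (1 : ℝ) ≤ (j.1 : ℝ) ^ 2 + (j.2 : ℝ) ^ 2 := by
  have : (1 : ℤ) ≤ j.1 ^ 2 + j.2 ^ 2 := by
    rcases j with ⟨a, b⟩
    rw [Ne, Prod.mk_eq_zero, not_and_or] at hj
    rcases hj with h | h
    · nlinarith [sq_nonneg b, Int.one_le_abs h, sq_abs a]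
    · nlinarith [sq_nonneg a, Int.one_le_abs h, sq_abs b]
  exact_mod_cast this

lemma integrableOn_Ioi_rpow_mul_exp_neg_mul_sub_one {m b : ℝ} (hm : -1 < m) (hb : 0 < b) :
    IntegrableOn (fun t : ℝ => t ^ m * rexp (-b * (t - 1))) (Set.Ioi 1) := by
  have h : IntegrableOn (fun t : ℝ => t ^ m * rexp (-b * t ^ (1 : ℝ))) (Set.Ioi 1) :=
    (integrableOn_rpow_mul_exp_neg_mul_rpow hm zero_lt_one hb).mono_set
      (Set.Ioi_subset_Ioi zero_le_one)
  refine IntegrableOn.congr_fun (h.const_mul (rexp b)) (fun t _ => ?_) measurableSet_Ioi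
  rw [rpow_one, mul_sub, mul_one, sub_eq_add_neg, neg_neg, Real.exp_add]
  ring

lemma exists_norm_integral_Ioi_cpow_mul_exp_le (z : ℂ) {α : ℝ} (hα : 0 < α) :
    ∃ M ≥ 0, ∀ Q : ℂ, α ≤ Q.re →
      ‖∫ t in Set.Ioi (1 : ℝ), (t : ℂ) ^ z * cexp (-(π : ℂ) * Q * t)‖ ≤
        M * rexp (-(π * Q.re)) := by
  set m := max z.re 0
  set g : ℝ → ℝ := fun t => t ^ m * rexp (-(π * α) * (t - 1))
  have hg : IntegrableOn g (Set.Ioi 1) :=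
    integrableOn_Ioi_rpow_mul_exp_neg_mul_sub_one (by simp [m]) (by positivity)
  refine ⟨∫ t in Set.Ioi 1, g t,
    setIntegral_nonneg measurableSet_Ioi fun t (ht : 1 < t) =>
      mul_nonneg (rpow_nonneg (zero_lt_one.trans ht).le _) (exp_pos _).le, fun Q hQ => ?_⟩
  refine (norm_integral_le_of_norm_le (hg.const_mul (rexp (-(π * Q.re)))) ?_).trans_eq
    (by rw [integral_const_mul, mul_comm])
  rw [ae_restrict_iff' measurableSet_Ioi]
  filter_upwards with t (ht : 1 < t)
  have ht0 : 0 < t := zero_lt_one.trans ht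
  have hexp : -(π * Q.re * t) ≤ -(π * Q.re) + -(π * α) * (t - 1) := by
    nlinarith [mul_le_mul_of_nonneg_right hQ (sub_nonneg.2 ht.le), pi_pos]
  calc ‖(t : ℂ) ^ z * cexp (-(π : ℂ) * Q * t)‖ = t ^ z.re * rexp (-(π * Q.re * t)) := by
        rw [norm_mul, norm_cpow_eq_rpow_re_of_pos ht0, Complex.norm_exp]
        simp
    _ ≤ t ^ m * (rexp (-(π * Q.re)) * rexp (-(π * α) * (t - 1))) := by
        rw [← Real.exp_add]
        gcongr
        · exact ht.le
        · exact le_max_left _ _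
    _ = rexp (-(π * Q.re)) * g t := by ring

lemma norm_tsum_subtype_sub_tsum_subtype_le {ι E : Type*} [NormedAddCommGroup E]
    [CompleteSpace E] {f : ι → E} {p : ι → Prop} {N g : ι → ℝ} {γ : ℝ} (R : ℝ)
    (hγ : 0 ≤ γ) (hN : ∀ i, 0 ≤ N i) (hg : Summable g) (hg0 : ∀ i, 0 ≤ g i)
    (hf : ∀ i, p i → ‖f i‖ ≤ rexp (-γ * N i) * g i) :
    ‖∑' i : {i // p i}, f i - ∑' i : {i // p i ∧ N i ≤ R}, f i‖ ≤
      rexp (-γ * R) * ∑' i, g i := by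
  set S := {i | p i}
  set S' := {i | p i ∧ N i ≤ R}
  have hS' : S' ⊆ S := fun i hi => hi.1
  have hsummable : ∀ T ⊆ S, Summable (T.indicator f) := fun T hT => hg.of_norm_bounded fun i => by
    by_cases hi : i ∈ T
    · rw [Set.indicator_of_mem hi]
      exact (hf i (hT hi)).trans
        (mul_le_of_le_one_left (hg0 i) (exp_le_one_iff.2 (by nlinarith [hN i])))
    · rw [Set.indicator_of_notMem hi, norm_zero]
      exact hg0 i
  have htail : ∑' i : S, f i - ∑' i : S', f i = ∑' i, (S \ S').indicator f i := by
    rw [tsum_subtype, tsum_subtype, Set.indicator_sdiff hS',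
      ← (hsummable S subset_rfl).tsum_sub (hsummable S' hS')]
    rfl
  change ‖∑' i : S, f i - ∑' i : S', f i‖ ≤ _
  rw [htail]
  refine tsum_of_norm_bounded (hg.hasSum.mul_left (rexp (-γ * R))) fun i => ?_
  by_cases hi : i ∈ S \ S'
  · obtain ⟨hp, hR⟩ : p i ∧ R < N i := ⟨hi.1, not_le.1 fun hle => hi.2 ⟨hi.1, hle⟩⟩
    rw [Set.indicator_of_mem hi]
    refine (hf i hp).trans (mul_le_mul_of_nonneg_right ?_ (hg0 i))
    exact exp_le_exp.2 (by nlinarith)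
  · rw [Set.indicator_of_notMem hi, norm_zero]
    exact mul_nonneg (exp_pos _).le (hg0 i)

lemma exists_norm_integral_Ioi_cpow_mul_exp_quadFormZ_le {B : Matrix (Fin 2) (Fin 2) ℂ}
    (hB : (reMat B).PosDef) (z : ℂ) :
    ∃ M ≥ 0, ∃ γ > 0, ∀ j : ℤ × ℤ, j ≠ 0 →
      ‖∫ t in Set.Ioi (1 : ℝ), (t : ℂ) ^ z * cexp (-(π : ℂ) * quadFormZ B j * t)‖ ≤
        M * rexp (-γ * ((j.1 : ℝ) ^ 2 + (j.2 : ℝ) ^ 2)) := by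
  obtain ⟨α, hα, hQ⟩ := exists_pos_mul_le_re_quadForm hB
  obtain ⟨M, hM, hint⟩ := exists_norm_integral_Ioi_cpow_mul_exp_le z hα
  refine ⟨M, hM, π * α, by positivity, fun j hj => ?_⟩
  have hN := one_le_sq_add_sq_of_ne_zero hj
  have hre : α * ((j.1 : ℝ) ^ 2 + (j.2 : ℝ) ^ 2) ≤ (quadFormZ B j).re :=
    hQ ((j.1 : ℝ), (j.2 : ℝ))
  refine (hint _ (by nlinarith)).trans (mul_le_mul_of_nonneg_left (exp_le_exp.2 ?_) hM)
  nlinarith [pi_pos]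

lemma exists_norm_incGammaTerm_le {A : Matrix (Fin 2) (Fin 2) ℂ} (hA : (reMat A).PosDef)
    (hA' : (reMat A⁻¹).PosDef) (s : ℂ) :
    ∃ K ≥ 0, ∃ γ > 0, ∀ j : ℤ × ℤ, j ≠ 0 →
      ‖incGammaTerm A s j‖ ≤ K * rexp (-γ * ((j.1 : ℝ) ^ 2 + (j.2 : ℝ) ^ 2)) := by
  obtain ⟨M₁, hM₁, γ₁, hγ₁, h₁⟩ := exists_norm_integral_Ioi_cpow_mul_exp_quadFormZ_le hA (s - 1)
  obtain ⟨M₂, hM₂, γ₂, hγ₂, h₂⟩ := exists_norm_integral_Ioi_cpow_mul_exp_quadFormZ_le hA' (-s)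
  set c := ‖1 / A.det ^ ((1 : ℂ) / 2)‖
  refine ⟨M₁ + c * M₂, by positivity, min γ₁ γ₂, lt_min hγ₁ hγ₂, fun j hj => ?_⟩
  set N := (j.1 : ℝ) ^ 2 + (j.2 : ℝ) ^ 2
  rw [incGammaTerm]
  refine (norm_add_le _ _).trans ?_
  rw [norm_mul]
  calc _ ≤ M₁ * rexp (-γ₁ * N) + c * (M₂ * rexp (-γ₂ * N)) :=
        add_le_add (h₁ j hj) (mul_le_mul_of_nonneg_left (h₂ j hj) (norm_nonneg _))
    _ ≤ M₁ * rexp (-min γ₁ γ₂ * N) + c * (M₂ * rexp (-min γ₁ γ₂ * N)) := by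
        gcongr
        exacts [min_le_left _ _, min_le_right _ _]
    _ = (M₁ + c * M₂) * rexp (-min γ₁ γ₂ * N) := by ring

theorem incomplete_gamma_series_truncation_general
    (A : Matrix (Fin 2) (Fin 2) ℂ)
    (hpd : (reMat A).PosDef) (hpdinv : (reMat A⁻¹).PosDef) (s : ℂ) :
    ∃ C > (0 : ℝ), ∃ c > (0 : ℝ), ∀ ρ : ℝ, 1 ≤ ρ →
      ‖(∑' j : {j : ℤ × ℤ // j ≠ 0}, incGammaTerm A s j.1) -
          ∑' j : {j : ℤ × ℤ //
            j ≠ 0 ∧ ((j.1 : ℝ) ^ 2 + (j.2 : ℝ) ^ 2 ≤ ρ ^ 2)}, incGammaTerm A s j.1‖ ≤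
        C * Real.exp (-c * (ρ - 1) ^ 2) := by
  obtain ⟨K, hK, γ, hγ, hbound⟩ := exists_norm_incGammaTerm_le hpd hpdinv s
  set N : ℤ × ℤ → ℝ := fun j => (j.1 : ℝ) ^ 2 + (j.2 : ℝ) ^ 2
  set T := ∑' j, K * rexp (-(γ / 2) * N j)
  have hT : 0 ≤ T := tsum_nonneg fun _ => by positivity
  refine ⟨T + 1, by positivity, γ / 2, by positivity, fun ρ hρ => ?_⟩
  calc _ ≤ rexp (-(γ / 2) * ρ ^ 2) * T := by
        refine norm_tsum_subtype_sub_tsum_subtype_le (N := N) (ρ ^ 2) (by positivity)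
          (fun j => by positivity) ((summable_exp_neg_mul_sq_add_sq (half_pos hγ)).mul_left K)
          (fun j => by positivity) fun j hj => (hbound j hj).trans_eq ?_
        rw [mul_left_comm, ← Real.exp_add]
        dsimp only [N]
        ring_nf
    _ ≤ (T + 1) * rexp (-(γ / 2) * (ρ - 1) ^ 2) := by
        rw [mul_comm]
        exact mul_le_mul (by linarith) (exp_le_exp.2 (by nlinarith)) (exp_pos _).le (by positivity)

/-- Gaussian decay of the truncation error of the incomplete-Gamma series: there are
constants `C, c > 0` (depending on `A` and `s`) such that the tail of the series beyond
the lattice points with `j₁² + j₂² ≤ ρ²` is bounded by `C e^{-c (ρ-1)²}` for all `ρ ≥ 1`. -/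
theorem incomplete_gamma_series_truncation
    (A : Matrix (Fin 2) (Fin 2) ℂ) (hsym : A.IsSymm) (hdet : A.det ≠ 0)
    (hpd : (reMat A).PosDef) (hpdinv : (reMat A⁻¹).PosDef) (s : ℂ) :
    ∃ C > (0 : ℝ), ∃ c > (0 : ℝ), ∀ ρ : ℝ, 1 ≤ ρ →
      ‖(∑' j : {j : ℤ × ℤ // j ≠ 0}, incGammaTerm A s j.1) -
          ∑' j : {j : ℤ × ℤ //
            j ≠ 0 ∧ ((j.1 : ℝ) ^ 2 + (j.2 : ℝ) ^ 2 ≤ ρ ^ 2)}, incGammaTerm A s j.1‖ ≤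
        C * Real.exp (-c * (ρ - 1) ^ 2) :=
  incomplete_gamma_series_truncation_general A hpd hpdinv s
end
end

section
/- Let A be a 2×2 complex symmetric matrix with Re(A) positive definite, and set Ω = { x ∈ ℝ² : |Q_A(x)| ≤ 1 } (a compact neighborhood of the origin). Define I₁(s) = ∫_Ω Q_A(x)^{−s} dx for Re(s) < 1 and I₂(s) = ∫_{ℝ²∖Ω} Q_A(x)^{−s} dx for Re(s) > 1; both integrals converge absolutely on the stated ranges. Then there exists a function G analytic on ℂ∖{1} such that G(s) = I₁(s) whenever Re(s) < 1 and G(s) = −I₂(s) whenever Re(s) > 1. -/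
open Complex MeasureTheory

noncomputable section

/-!
In polar coordinates `x = r (cos θ, sin θ)`, homogeneity gives `Q(x)^(-s) = r^(-2s) q(θ)^(-s)`
with `q(θ) = Q(cos θ, sin θ)` in the slit plane, and `Ω` becomes `{r ≤ ρ(θ)}` with
`ρ(θ) = |q(θ)|^(-1/2)`. The radial integrals `∫₀^ρ r^(1-2s) dr` (for `Re s < 1`) and
`∫_ρ^∞ r^(1-2s) dr` (for `Re s > 1`) are `±ρ^(2-2s)/(2-2s)`, so `I₁` and `-I₂` both equal
`K(s)/(2-2s)` with `K(s) = ∫ ρ(θ)^(2-2s) q(θ)^(-s) dθ`. Writing the integrand of `K` as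
`exp(s a(θ) + b(θ))` with `a`, `b` continuous on a compact interval shows that `K` is entire.
-/

open Set Real

theorem continuous_quadForm (A : Matrix (Fin 2) (Fin 2) ℂ) : Continuous (quadForm A) := by
  unfold quadForm; fun_prop

theorem quadForm_smul (A : Matrix (Fin 2) (Fin 2) ℂ) (r : ℝ) (v : ℝ × ℝ) :
    quadForm A (r • v) = (r : ℂ) ^ 2 * quadForm A v := by
  simp only [quadForm, Prod.smul_fst, Prod.smul_snd, smul_eq_mul]; push_cast; ring

theorem re_quadForm_pos {A : Matrix (Fin 2) (Fin 2) ℂ} (hA : (reMat A).PosDef) {v : ℝ × ℝ}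
    (hv : v ≠ 0) : 0 < (quadForm A v).re := by
  have hv' : ![v.1, v.2] ≠ 0 := fun h =>
    hv (Prod.ext (by simpa using congrFun h 0) (by simpa using congrFun h 1))
  have hpos := hA.dotProduct_mulVec_pos hv'
  have hsymm : (A 1 0).re = (A 0 1).re := congrFun (congrFun hA.isHermitian 0) 1
  simp only [dotProduct, Matrix.mulVec, Fin.sum_univ_two, star_trivial, reMat,
    Matrix.map_apply, Matrix.cons_val_zero, Matrix.cons_val_one, hsymm] at hpos
  have hQ : quadForm A v = ((v.1 ^ 2 : ℝ) : ℂ) * A 0 0 + ((2 * v.1 * v.2 : ℝ) : ℂ) * A 0 1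
      + ((v.2 ^ 2 : ℝ) : ℂ) * A 1 1 := by
    unfold quadForm; push_cast; ring
  rw [hQ]
  simp only [add_re, re_ofReal_mul]
  linarith

section Polar

variable {E : Type*} [NormedAddCommGroup E]

theorem integrable_of_integrableOn_polarCoord_target [NormedSpace ℝ E] {g : ℝ × ℝ → E}
    (hg : AEStronglyMeasurable g)
    (h : IntegrableOn (fun p : ℝ × ℝ => p.1 • g (polarCoord.symm p)) polarCoord.target) :
    Integrable g := by
  refine ⟨hg, ?_⟩
  rw [HasFiniteIntegral, ← lintegral_comp_polarCoord_symm]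
  refine lt_of_eq_of_lt (setLIntegral_congr_fun polarCoord.open_target.measurableSet
    fun p hp => ?_) h.2
  rw [enorm_smul, Real.enorm_of_nonneg hp.1.le, smul_eq_mul]

theorem integrableOn_polarCoord_target_of_norm_le {φ : ℝ × ℝ → E}
    (hφ : AEStronglyMeasurable φ (volume.restrict polarCoord.target)) {h : ℝ → ℝ}
    (hh : IntegrableOn h (Ioi 0)) (hle : ∀ p ∈ polarCoord.target, ‖φ p‖ ≤ h p.1) :
    IntegrableOn φ polarCoord.target := by
  have hh' : IntegrableOn (fun p : ℝ × ℝ => h p.1) polarCoord.target := by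
    rw [polarCoord_target, IntegrableOn, Measure.volume_eq_prod, ← Measure.prod_restrict]
    exact hh.comp_fst _
  exact hh'.mono' hφ (ae_restrict_of_forall_mem polarCoord.open_target.measurableSet hle)

theorem integral_eq_integral_Ioo_integral_Ioi_polarCoord_symm [NormedSpace ℝ E] {g : ℝ × ℝ → E}
    (h : IntegrableOn (fun p : ℝ × ℝ => p.1 • g (polarCoord.symm p)) polarCoord.target) :
    ∫ x, g x = ∫ θ in Ioo (-π) π, ∫ r in Ioi 0, r • g (polarCoord.symm (r, θ)) := by
  rw [IntegrableOn, polarCoord_target, Measure.volume_eq_prod, ← Measure.prod_restrict] at h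
  rw [← integral_comp_polarCoord_symm, polarCoord_target, Measure.volume_eq_prod, ← Measure.prod_restrict,
    integral_prod_symm _ h]

end Polar

theorem differentiable_setIntegral_cexp_mul_add {α : Type*} [MeasurableSpace α]
    [TopologicalSpace α] [OpensMeasurableSpace α] [T2Space α] {μ : Measure α}
    [IsFiniteMeasureOnCompacts μ] {K : Set α} (hK : IsCompact K) {a b : α → ℂ}
    (ha : ContinuousOn a K) (hb : ContinuousOn b K) :
    Differentiable ℂ fun s => ∫ x in K, cexp (s * a x + b x) ∂μ := by
  obtain ⟨A, hA⟩ := hK.exists_bound_of_continuousOn ha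
  obtain ⟨B, hB⟩ := hK.exists_bound_of_continuousOn hb
  have hcont (s : ℂ) : ContinuousOn (fun x => cexp (s * a x + b x)) K := by fun_prop
  intro s₀
  refine (hasDerivAt_integral_of_dominated_loc_of_deriv_le (μ := μ.restrict K)
    (F' := fun s x => cexp (s * a x + b x) * a x)
    (bound := fun _ => Real.exp ((‖s₀‖ + 1) * A + B) * A) (Metric.ball_mem_nhds s₀ one_pos)
    (.of_forall fun s => (hcont s).aestronglyMeasurable hK.measurableSet)
    ((hcont s₀).integrableOn_compact hK)
    (((hcont s₀).mul ha).aestronglyMeasurable hK.measurableSet) ?_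
    (integrableOn_const hK.measure_lt_top.ne) ?_).2.differentiableAt
  · refine ae_restrict_of_forall_mem hK.measurableSet fun x hx s hs => ?_
    have hs' : ‖s‖ ≤ ‖s₀‖ + 1 := by
      have := norm_sub_norm_le s s₀
      rw [Metric.mem_ball, dist_eq_norm] at hs
      linarith
    have hexp : (s * a x + b x).re ≤ (‖s₀‖ + 1) * A + B :=
      calc (s * a x + b x).re ≤ ‖s * a x + b x‖ := re_le_norm _
        _ ≤ ‖s * a x‖ + ‖b x‖ := norm_add_le _ _
        _ = ‖s‖ * ‖a x‖ + ‖b x‖ := by rw [norm_mul]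
        _ ≤ (‖s₀‖ + 1) * A + B := by gcongr <;> first | exact hA x hx | exact hB x hx
    rw [norm_mul, norm_exp]
    gcongr
    exact hA x hx
  · exact .of_forall fun x s _ => ((hasDerivAt_mul_const (a x)).add_const (b x)).cexp

theorem ofReal_mul_cpow {r : ℝ} (hr : 0 < r) {z : ℂ} (hz : z ≠ 0) (w : ℂ) :
    ((r : ℂ) * z) ^ w = (r : ℂ) ^ w * z ^ w := by
  have hr' : (r : ℂ) ≠ 0 := ofReal_ne_zero.2 hr.ne'
  rw [cpow_def_of_ne_zero (mul_ne_zero hr' hz), log_ofReal_mul hr hz, cpow_def_of_ne_zero hr',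
    cpow_def_of_ne_zero hz, ofReal_log hr.le, add_mul, Complex.exp_add]

theorem cpow_two_sub_two_mul_mul_cpow_neg {x y : ℂ} (hx : x ≠ 0) (hy : y ≠ 0) (s : ℂ) :
    x ^ (2 - 2 * s) * y ^ (-s) = cexp (s * -(2 * log x + log y) + 2 * log x) := by
  rw [cpow_def_of_ne_zero hx, cpow_def_of_ne_zero hy, ← Complex.exp_add]
  ring_nf

theorem two_sub_two_mul_ne_zero {s : ℂ} (hs : s ≠ 1) : 2 - 2 * s ≠ 0 := fun h =>
  hs (by linear_combination (-1 / 2 : ℂ) * h)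

section Homogeneous

variable {f : ℝ × ℝ → ℂ}

def angularPart (f : ℝ × ℝ → ℂ) (θ : ℝ) : ℂ := f (Real.cos θ, Real.sin θ)

def levelRadius (f : ℝ × ℝ → ℂ) (θ : ℝ) : ℝ := (√‖angularPart f θ‖)⁻¹

def angularIntegral (f : ℝ × ℝ → ℂ) (s : ℂ) : ℂ :=
  ∫ θ in Ioo (-π) π, (levelRadius f θ : ℂ) ^ (2 - 2 * s) * angularPart f θ ^ (-s)

theorem continuous_angularPart (hf : Continuous f) : Continuous (angularPart f) :=
  hf.comp (by fun_prop)

theorem angularPart_mem_slitPlane (hslit : ∀ x ≠ 0, f x ∈ slitPlane) (θ : ℝ) :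
    angularPart f θ ∈ slitPlane := by
  refine hslit _ fun h => ?_
  have hcos : Real.cos θ = 0 := congrArg Prod.fst h
  have hsin : Real.sin θ = 0 := congrArg Prod.snd h
  simpa [hcos, hsin] using Real.sin_sq_add_cos_sq θ

theorem levelRadius_pos (hslit : ∀ x ≠ 0, f x ∈ slitPlane) (θ : ℝ) : 0 < levelRadius f θ :=
  inv_pos.2 (sqrt_pos.2 (norm_pos_iff.2 (slitPlane_ne_zero (angularPart_mem_slitPlane hslit θ))))

theorem continuous_levelRadius (hf : Continuous f) (hslit : ∀ x ≠ 0, f x ∈ slitPlane) :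
    Continuous (levelRadius f) :=
  (continuous_angularPart hf).norm.sqrt.inv₀ fun θ => (inv_pos.1 (levelRadius_pos hslit θ)).ne'

theorem apply_polarCoord_symm (hhom : ∀ r : ℝ, 0 < r → ∀ x, f (r • x) = (r : ℂ) ^ 2 * f x)
    {r : ℝ} (hr : 0 < r) (θ : ℝ) :
    f (polarCoord.symm (r, θ)) = (r : ℂ) ^ 2 * angularPart f θ := by
  rw [angularPart, ← hhom r hr, polarCoord_symm_apply, Prod.smul_mk, smul_eq_mul, smul_eq_mul]

theorem norm_apply_polarCoord_symm_le_one_iff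
    (hhom : ∀ r : ℝ, 0 < r → ∀ x, f (r • x) = (r : ℂ) ^ 2 * f x)
    (hslit : ∀ x ≠ 0, f x ∈ slitPlane) {r : ℝ} (hr : 0 < r) (θ : ℝ) :
    ‖f (polarCoord.symm (r, θ))‖ ≤ 1 ↔ r ≤ levelRadius f θ := by
  have ha : 0 < ‖angularPart f θ‖ :=
    norm_pos_iff.2 (slitPlane_ne_zero (angularPart_mem_slitPlane hslit θ))
  rw [apply_polarCoord_symm hhom hr, norm_mul, norm_pow, norm_real, Real.norm_of_nonneg hr.le,
    levelRadius, inv_eq_one_div, le_div_iff₀ (sqrt_pos.2 ha), ← pow_le_one_iff_of_nonneg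
      (a := r * √_) (by positivity) two_ne_zero, mul_pow, sq_sqrt ha.le]

theorem smul_cpow_apply_polarCoord_symm
    (hhom : ∀ r : ℝ, 0 < r → ∀ x, f (r • x) = (r : ℂ) ^ 2 * f x)
    (hslit : ∀ x ≠ 0, f x ∈ slitPlane) (s : ℂ) {r : ℝ} (hr : 0 < r) (θ : ℝ) :
    r • f (polarCoord.symm (r, θ)) ^ (-s) = (r : ℂ) ^ (1 - 2 * s) * angularPart f θ ^ (-s) := by
  rw [apply_polarCoord_symm hhom hr, ← ofReal_pow, ofReal_mul_cpow (pow_pos hr 2)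
    (slitPlane_ne_zero (angularPart_mem_slitPlane hslit θ)), real_smul, ← mul_assoc,
    ← rpow_natCast, ← cpow_mul_ofReal_nonneg hr.le,
    show (1 : ℂ) - 2 * s = 1 + ((2 : ℕ) : ℝ) * -s by push_cast; ring,
    cpow_add _ _ (ofReal_ne_zero.2 hr.ne'), cpow_one]

theorem exists_norm_angularPart_cpow_le (hf : Continuous f) (hslit : ∀ x ≠ 0, f x ∈ slitPlane)
    (s : ℂ) : ∃ C, ∀ θ ∈ Icc (-π) π, ‖angularPart f θ ^ (-s)‖ ≤ C :=
  isCompact_Icc.exists_bound_of_continuousOn <|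
    ((continuous_angularPart hf).cpow continuous_const
      (angularPart_mem_slitPlane hslit)).continuousOn

-- `S` bounds every radial section `J θ`, so `C · 1_S(r) · r^(1 - 2 Re s)` is a majorant in polar
-- coordinates, `C` bounding `q(θ)^(-s)` by compactness.
theorem integrableOn_and_setIntegral_eq_of_radial (hf : Continuous f)
    (hhom : ∀ r : ℝ, 0 < r → ∀ x, f (r • x) = (r : ℂ) ^ 2 * f x)
    (hslit : ∀ x ≠ 0, f x ∈ slitPlane) (s : ℂ) {W : Set (ℝ × ℝ)} (hW : MeasurableSet W)
    {J : ℝ → Set ℝ} (hJ : ∀ θ, MeasurableSet (J θ)) (hJ0 : ∀ θ, J θ ⊆ Ioi 0)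
    (hWJ : ∀ θ, ∀ r > 0, polarCoord.symm (r, θ) ∈ W ↔ r ∈ J θ) {S : Set ℝ}
    (hS : MeasurableSet S) (hSint : IntegrableOn (fun r : ℝ => r ^ (1 - 2 * s.re)) S)
    (hJS : ∀ θ ∈ Ioo (-π) π, J θ ⊆ S) :
    IntegrableOn (fun x => f x ^ (-s)) W ∧
      ∫ x in W, f x ^ (-s) =
        ∫ θ in Ioo (-π) π, (∫ r in J θ, (r : ℂ) ^ (1 - 2 * s)) * angularPart f θ ^ (-s) := by
  set F := W.indicator fun x => f x ^ (-s) with hFdef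
  have hF : Measurable F := (hf.measurable.pow_const (-s)).indicator hW
  have hpolar (θ : ℝ) {r : ℝ} (hr : 0 < r) : r • F (polarCoord.symm (r, θ)) =
      (J θ).indicator (fun r => (r : ℂ) ^ (1 - 2 * s) * angularPart f θ ^ (-s)) r := by
    rw [hFdef]
    by_cases h : r ∈ J θ
    · rw [indicator_of_mem ((hWJ θ r hr).2 h), indicator_of_mem h,
        smul_cpow_apply_polarCoord_symm hhom hslit s hr]
    · rw [indicator_of_notMem (mt (hWJ θ r hr).1 h), indicator_of_notMem h, smul_zero]
  obtain ⟨C, hC⟩ := exists_norm_angularPart_cpow_le hf hslit s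
  have hC0 : 0 ≤ C := (norm_nonneg _).trans (hC 0 ⟨by linarith [pi_pos], pi_pos.le⟩)
  have hint : IntegrableOn (fun p : ℝ × ℝ => p.1 • F (polarCoord.symm p)) polarCoord.target := by
    refine integrableOn_polarCoord_target_of_norm_le
      (measurable_fst.smul (hF.comp continuous_polarCoord_symm.measurable)).aestronglyMeasurable
      (IntegrableOn.integrable_indicator (hSint.const_mul C) hS).integrableOn ?_
    rintro ⟨r, θ⟩ ⟨hr, hθ⟩
    rw [hpolar θ hr]
    by_cases h : r ∈ J θ
    · rw [indicator_of_mem h, indicator_of_mem (hJS θ hθ h), norm_mul,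
        norm_cpow_eq_rpow_re_of_pos hr, mul_comm]
      simp only [sub_re, one_re, mul_re, re_ofNat, im_ofNat, zero_mul, sub_zero]
      exact mul_le_mul_of_nonneg_right (hC θ (Ioo_subset_Icc_self hθ)) (rpow_nonneg hr.le _)
    · rw [indicator_of_notMem h, norm_zero]
      exact indicator_apply_nonneg fun _ => mul_nonneg hC0 (rpow_nonneg hr.le _)
  refine ⟨(integrable_indicator_iff hW).1
    (integrable_of_integrableOn_polarCoord_target hF.aestronglyMeasurable hint), ?_⟩
  rw [← integral_indicator hW, integral_eq_integral_Ioo_integral_Ioi_polarCoord_symm hint]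
  refine setIntegral_congr_fun measurableSet_Ioo fun θ _ => ?_
  rw [setIntegral_congr_fun measurableSet_Ioi fun r hr => hpolar θ hr,
    setIntegral_indicator (hJ θ), inter_eq_right.2 (hJ0 θ), integral_mul_const]

theorem integrableOn_and_setIntegral_norm_le_one (hf : Continuous f)
    (hhom : ∀ r : ℝ, 0 < r → ∀ x, f (r • x) = (r : ℂ) ^ 2 * f x)
    (hslit : ∀ x ≠ 0, f x ∈ slitPlane) {s : ℂ} (hs : s.re < 1) :
    IntegrableOn (fun x => f x ^ (-s)) {x | ‖f x‖ ≤ 1} ∧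
      ∫ x in {x | ‖f x‖ ≤ 1}, f x ^ (-s) = angularIntegral f s / (2 - 2 * s) := by
  obtain ⟨θ₀, -, hθ₀⟩ := isCompact_Icc.exists_isMaxOn (nonempty_Icc.2 (neg_le_self pi_pos.le))
    (continuous_levelRadius hf hslit).continuousOn
  set M := levelRadius f θ₀
  have hM := levelRadius_pos hslit θ₀
  have hball := integrableOn_and_setIntegral_eq_of_radial hf hhom hslit s
    (measurableSet_le hf.norm.measurable measurable_const)
    (J := fun θ => Ioc 0 (levelRadius f θ)) (fun _ => measurableSet_Ioc)
    (fun _ => Ioc_subset_Ioi_self)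
    (fun θ r hr => (norm_apply_polarCoord_symm_le_one_iff hhom hslit hr θ).trans
      (and_iff_right hr).symm)
    (S := Ioc 0 M) measurableSet_Ioc
    ((intervalIntegrable_iff_integrableOn_Ioc_of_le hM.le).1
      (intervalIntegral.intervalIntegrable_rpow' (by linarith)))
    (fun θ hθ => Ioc_subset_Ioc_right (hθ₀ (Ioo_subset_Icc_self hθ)))
  refine ⟨hball.1, hball.2.trans ?_⟩
  rw [angularIntegral, ← integral_div]
  refine setIntegral_congr_fun measurableSet_Ioo fun θ _ => ?_
  have hs1 : 2 - 2 * s ≠ 0 := two_sub_two_mul_ne_zero (by rintro rfl; simp at hs)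
  rw [← intervalIntegral.integral_of_le (levelRadius_pos hslit θ).le,
    integral_cpow (Or.inl (by simp; linarith)), ofReal_zero,
    show (1 : ℂ) - 2 * s + 1 = 2 - 2 * s by ring, zero_cpow hs1, sub_zero, div_mul_eq_mul_div]

theorem integrableOn_and_setIntegral_one_lt_norm (hf : Continuous f)
    (hhom : ∀ r : ℝ, 0 < r → ∀ x, f (r • x) = (r : ℂ) ^ 2 * f x)
    (hslit : ∀ x ≠ 0, f x ∈ slitPlane) {s : ℂ} (hs : 1 < s.re) :
    IntegrableOn (fun x => f x ^ (-s)) {x | ‖f x‖ ≤ 1}ᶜ ∧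
      ∫ x in {x | ‖f x‖ ≤ 1}ᶜ, f x ^ (-s) = -(angularIntegral f s / (2 - 2 * s)) := by
  obtain ⟨θ₀, -, hθ₀⟩ := isCompact_Icc.exists_isMinOn (nonempty_Icc.2 (neg_le_self pi_pos.le))
    (continuous_levelRadius hf hslit).continuousOn
  set m := levelRadius f θ₀
  have hm := levelRadius_pos hslit θ₀
  have hcompl := integrableOn_and_setIntegral_eq_of_radial hf hhom hslit s
    (measurableSet_le hf.norm.measurable measurable_const).compl
    (J := fun θ => Ioi (levelRadius f θ)) (fun _ => measurableSet_Ioi)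
    (fun θ => Ioi_subset_Ioi (levelRadius_pos hslit θ).le)
    (fun θ r hr => (norm_apply_polarCoord_symm_le_one_iff hhom hslit hr θ).not.trans not_le)
    (S := Ioi m) measurableSet_Ioi (integrableOn_Ioi_rpow_of_lt (by linarith) hm)
    (fun θ hθ => Ioi_subset_Ioi (hθ₀ (Ioo_subset_Icc_self hθ)))
  refine ⟨hcompl.1, hcompl.2.trans ?_⟩
  rw [angularIntegral, ← integral_div, ← integral_neg]
  refine setIntegral_congr_fun measurableSet_Ioo fun θ _ => ?_
  rw [integral_Ioi_cpow_of_lt (by simp; linarith) (levelRadius_pos hslit θ),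
    show (1 : ℂ) - 2 * s + 1 = 2 - 2 * s by ring, neg_div, neg_mul, div_mul_eq_mul_div]

theorem differentiable_angularIntegral (hf : Continuous f) (hslit : ∀ x ≠ 0, f x ∈ slitPlane) :
    Differentiable ℂ (angularIntegral f) := by
  have hR : Continuous fun θ => log (levelRadius f θ : ℂ) :=
    (continuous_ofReal.comp (continuous_levelRadius hf hslit)).clog
      fun θ => ofReal_mem_slitPlane.2 (levelRadius_pos hslit θ)
  have hq : Continuous fun θ => log (angularPart f θ) :=
    (continuous_angularPart hf).clog (angularPart_mem_slitPlane hslit)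
  have hcexp : angularIntegral f = fun s => ∫ θ in Icc (-π) π,
      cexp (s * -(2 * log (levelRadius f θ : ℂ) + log (angularPart f θ)) +
        2 * log (levelRadius f θ : ℂ)) := by
    ext s
    rw [angularIntegral, integral_Icc_eq_integral_Ioo]
    congr 1 with θ
    exact cpow_two_sub_two_mul_mul_cpow_neg (ofReal_ne_zero.2 (levelRadius_pos hslit θ).ne')
      (slitPlane_ne_zero (angularPart_mem_slitPlane hslit θ)) s
  rw [hcexp]
  exact differentiable_setIntegral_cexp_mul_add isCompact_Icc
    (by fun_prop : Continuous _).continuousOn (by fun_prop : Continuous _).continuousOn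

theorem exists_differentiableOn_eq_setIntegral_cpow_neg (hf : Continuous f)
    (hhom : ∀ r : ℝ, 0 < r → ∀ x, f (r • x) = (r : ℂ) ^ 2 * f x)
    (hslit : ∀ x ≠ 0, f x ∈ slitPlane) :
    (∀ s : ℂ, s.re < 1 → IntegrableOn (fun x => f x ^ (-s)) {x | ‖f x‖ ≤ 1}) ∧
    (∀ s : ℂ, 1 < s.re → IntegrableOn (fun x => f x ^ (-s)) {x | ‖f x‖ ≤ 1}ᶜ) ∧
    ∃ G : ℂ → ℂ, DifferentiableOn ℂ G {s : ℂ | s ≠ 1} ∧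
      (∀ s : ℂ, s.re < 1 → G s = ∫ x in {x | ‖f x‖ ≤ 1}, f x ^ (-s)) ∧
      (∀ s : ℂ, 1 < s.re → G s = -∫ x in {x | ‖f x‖ ≤ 1}ᶜ, f x ^ (-s)) := by
  refine ⟨fun s hs => (integrableOn_and_setIntegral_norm_le_one hf hhom hslit hs).1,
    fun s hs => (integrableOn_and_setIntegral_one_lt_norm hf hhom hslit hs).1,
    fun s => angularIntegral f s / (2 - 2 * s), fun s hs => ?_,
    fun s hs => (integrableOn_and_setIntegral_norm_le_one hf hhom hslit hs).2.symm,
    fun s hs => by rw [(integrableOn_and_setIntegral_one_lt_norm hf hhom hslit hs).2, neg_neg]⟩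
  exact ((differentiable_angularIntegral hf hslit s).div (by fun_prop)
    (two_sub_two_mul_ne_zero hs)).differentiableWithinAt

end Homogeneous

theorem inner_outer_integrals_analytic_continuation_general
    (A : Matrix (Fin 2) (Fin 2) ℂ) (hpd : (reMat A).PosDef) :
    (∀ s : ℂ, s.re < 1 →
      IntegrableOn (fun x : ℝ × ℝ => quadForm A x ^ (-s))
        {x : ℝ × ℝ | ‖quadForm A x‖ ≤ 1}) ∧
    (∀ s : ℂ, 1 < s.re →
      IntegrableOn (fun x : ℝ × ℝ => quadForm A x ^ (-s))
        {x : ℝ × ℝ | ‖quadForm A x‖ ≤ 1}ᶜ) ∧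
    ∃ G : ℂ → ℂ, DifferentiableOn ℂ G {s : ℂ | s ≠ 1} ∧
      (∀ s : ℂ, s.re < 1 →
        G s = ∫ x in {x : ℝ × ℝ | ‖quadForm A x‖ ≤ 1},
          quadForm A x ^ (-s)) ∧
      (∀ s : ℂ, 1 < s.re →
        G s = -∫ x in {x : ℝ × ℝ | ‖quadForm A x‖ ≤ 1}ᶜ,
          quadForm A x ^ (-s)) :=
  exists_differentiableOn_eq_setIntegral_cpow_neg (continuous_quadForm A)
    (fun r _ => quadForm_smul A r)
    (fun _ hx => mem_slitPlane_iff.2 (.inl (re_quadForm_pos hpd hx)))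

/-- With `Ω = {x ∈ ℝ² : |Q_A(x)| ≤ 1}`, the integrals `I₁(s) = ∫_Ω Q_A(x)^{-s} dx`
(for `Re s < 1`) and `I₂(s) = ∫_{ℝ²∖Ω} Q_A(x)^{-s} dx` (for `Re s > 1`) converge
absolutely, and there is a function `G` analytic on `ℂ ∖ {1}` with `G = I₁` on
`{Re s < 1}` and `G = -I₂` on `{Re s > 1}`. -/
theorem inner_outer_integrals_analytic_continuation
    (A : Matrix (Fin 2) (Fin 2) ℂ) (hsym : A.IsSymm) (hpd : (reMat A).PosDef) :
    (∀ s : ℂ, s.re < 1 →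
      IntegrableOn (fun x : ℝ × ℝ => quadForm A x ^ (-s))
        {x : ℝ × ℝ | ‖quadForm A x‖ ≤ 1}) ∧
    (∀ s : ℂ, 1 < s.re →
      IntegrableOn (fun x : ℝ × ℝ => quadForm A x ^ (-s))
        {x : ℝ × ℝ | ‖quadForm A x‖ ≤ 1}ᶜ) ∧
    ∃ G : ℂ → ℂ, DifferentiableOn ℂ G {s : ℂ | s ≠ 1} ∧
      (∀ s : ℂ, s.re < 1 →
        G s = ∫ x in {x : ℝ × ℝ | ‖quadForm A x‖ ≤ 1},
          quadForm A x ^ (-s)) ∧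
      (∀ s : ℂ, 1 < s.re →
        G s = -∫ x in {x : ℝ × ℝ | ‖quadForm A x‖ ≤ 1}ᶜ,
          quadForm A x ^ (-s)) :=
  inner_outer_integrals_analytic_continuation_general A hpd
end
end
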